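/- arXiv:1705.08552 — 3 statements merged into one kernel-verified Lean document; each statement's English description precedes it below -/
import Mathlib

section
/- For binary strings w^(1), w^(2), w^(3) of length t ≥ 1 with bits w^(j)_k, the product of transition matrices Ã_{w1_t w2_t w3_t} ⋯ Ã_{w1_1 w2_1 w3_1} equals (-1)^{ι((w^(1) ⊕ S w^(1)) · w^(2))} · i^{ι(w^(1) ⊕ w^(2) ⊕ w^(3))} · B_{w1_1 w2_t}, where Ã_{b1 b2 b3} := i^{b1 ⊕ b2 ⊕ b3} B_{b1 b2}, ι counts the number of 1-bits, ⊕ and · act bitwise, and S is the left circular shift (Sw)_i = w_{(i mod t)+1}. -/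
def BmatC (a b : Bool) : Matrix (Fin 2) (Fin 2) ℂ :=
  match a, b with
  | false, false => !![1, 0; -1, 0]
  | true,  false => !![0, -1; 0, 1]
  | false, true  => !![1, 0; 1, 0]
  | true,  true  => !![0, 1; 0, 1]

def Atil (b1 b2 b3 : Bool) : Matrix (Fin 2) (Fin 2) ℂ :=
  Complex.I ^ (xor (xor b1 b2) b3).toNat • BmatC b1 b2

def iota {t : ℕ} (w : Fin t → Bool) : ℕ := ∑ i, (w i).toNat

lemma Bmul (a b c d : Bool) :
    BmatC a b * BmatC c d = ((-1 : ℂ) ^ (xor c a && xor d b).toNat) • BmatC c b := by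
  rcases a <;> rcases b <;> rcases c <;> rcases d <;>
    · ext i j
      fin_cases i <;> fin_cases j <;>
        simp [BmatC, Matrix.mul_apply, Fin.sum_univ_two]

lemma aux (n : ℕ) (w1 w2 w3 : Fin (n+1) → Bool) :
    (List.ofFn (fun k : Fin (n + 1) => Atil (w1 k) (w2 k) (w3 k))).reverse.prod =
      ((-1 : ℂ) ^ (∑ k : Fin n, (xor (w1 0) (w1 k.succ) && xor (w2 k.castSucc) (w2 k.succ)).toNat)) •
        (Complex.I ^ iota (fun k => xor (xor (w1 k) (w2 k)) (w3 k))) •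
          BmatC (w1 0) (w2 (Fin.last n)) := by
  induction n with
  | zero =>
    simp [Atil, iota, Fin.last]
  | succ n ih =>
    have hsplit : (List.ofFn (fun k : Fin (n + 2) => Atil (w1 k) (w2 k) (w3 k))) =
        (List.ofFn (fun k : Fin (n + 1) =>
          Atil (w1 k.castSucc) (w2 k.castSucc) (w3 k.castSucc))).concat
          (Atil (w1 (Fin.last (n+1))) (w2 (Fin.last (n+1))) (w3 (Fin.last (n+1)))) := by
      rw [List.ofFn_succ']
    rw [hsplit, List.concat_eq_append, List.reverse_append, List.reverse_singleton,
      List.singleton_append, List.prod_cons,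
      ih (fun k => w1 k.castSucc) (fun k => w2 k.castSucc) (fun k => w3 k.castSucc)]
    simp only [Fin.castSucc_zero]
    rw [Atil, smul_mul_assoc, mul_smul_comm, mul_smul_comm, Bmul]
    have hlast : Fin.last (n+1) = (Fin.last n).succ := rfl
    have hiota : iota (fun k : Fin (n+2) => xor (xor (w1 k) (w2 k)) (w3 k)) =
        iota (fun k : Fin (n+1) => xor (xor (w1 k.castSucc) (w2 k.castSucc)) (w3 k.castSucc))
          + (xor (xor (w1 (Fin.last (n+1))) (w2 (Fin.last (n+1)))) (w3 (Fin.last (n+1)))).toNat := by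
      rw [iota, Fin.sum_univ_castSucc]; rfl
    have hsign : (∑ k : Fin (n+1),
          (xor (w1 0) (w1 k.succ) && xor (w2 k.castSucc) (w2 k.succ)).toNat) =
        (∑ k : Fin n, (xor (w1 0) (w1 k.succ.castSucc) && xor (w2 k.castSucc.castSucc) (w2 k.succ.castSucc)).toNat)
          + (xor (w1 0) (w1 (Fin.last (n+1))) && xor (w2 (Fin.last n).castSucc) (w2 (Fin.last (n+1)))).toNat := by
      rw [Fin.sum_univ_castSucc]
      congr 1
    rw [hiota, hsign, smul_smul, smul_smul, smul_smul, smul_smul]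
    congr 1
    ring

lemma key (n : ℕ) (x y : Fin (n+1) → ZMod 2) :
    ∑ k : Fin (n+1), (x k + x (k+1)) * y k
      = ∑ k : Fin n, (x 0 + x k.succ) * (y k.castSucc + y k.succ) := by
  have h2 : ∀ a : ZMod 2, a + a = 0 := by decide
  have step : ∀ k : Fin (n+1), (x k + x (k+1)) * y k
      = (x 0 + x k) * y k + (x 0 + x (k+1)) * y k := by
    intro k; linear_combination (-(y k)) * h2 (x 0)
  rw [Finset.sum_congr rfl (fun k _ => step k), Finset.sum_add_distrib]
  have hA : ∑ k : Fin (n+1), (x 0 + x k) * y k = ∑ j : Fin n, (x 0 + x j.succ) * y j.succ := by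
    rw [Fin.sum_univ_succ]
    simp [h2 (x 0)]
  have hB : ∑ k : Fin (n+1), (x 0 + x (k+1)) * y k
      = ∑ j : Fin n, (x 0 + x j.succ) * y j.castSucc := by
    rw [Fin.sum_univ_castSucc]
    simp [Fin.last_add_one, h2 (x 0), Fin.coeSucc_eq_succ]
  rw [hA, hB, ← Finset.sum_add_distrib]
  apply Finset.sum_congr rfl
  intro j _
  ring

lemma castXor (a b : Bool) : ((xor a b).toNat : ZMod 2) = (a.toNat : ZMod 2) + b.toNat := by
  cases a <;> cases b <;> decide

lemma castAnd (a b : Bool) : ((a && b).toNat : ZMod 2) = (a.toNat : ZMod 2) * b.toNat := by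
  cases a <;> cases b <;> decide

lemma parity (n : ℕ) (w1 w2 : Fin (n+1) → Bool) :
    (-1:ℂ) ^ iota (fun k => xor (w1 k) (w1 (k+1)) && w2 k)
      = (-1:ℂ) ^ (∑ k : Fin n, (xor (w1 0) (w1 k.succ) && xor (w2 k.castSucc) (w2 k.succ)).toNat) := by
  have hZ : ((iota (fun k : Fin (n+1) => xor (w1 k) (w1 (k+1)) && w2 k) : ℕ) : ZMod 2)
      = ((∑ k : Fin n, (xor (w1 0) (w1 k.succ) && xor (w2 k.castSucc) (w2 k.succ)).toNat : ℕ) : ZMod 2) := by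
    rw [iota]
    push_cast
    simp only [castAnd, castXor]
    exact key n (fun k => ((w1 k).toNat : ZMod 2)) (fun k => ((w2 k).toNat : ZMod 2))
  have hmod := (ZMod.natCast_eq_natCast_iff' _ _ _).mp hZ
  rw [neg_one_pow_eq_pow_mod_two, hmod, ← neg_one_pow_eq_pow_mod_two]

theorem stmt2 (n : ℕ) (w1 w2 w3 : Fin (n + 1) → Bool) :
    (List.ofFn (fun k : Fin (n + 1) => Atil (w1 k) (w2 k) (w3 k))).reverse.prod =
      ((-1 : ℂ) ^ iota (fun k => xor (w1 k) (w1 (k + 1)) && w2 k)) •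
        (Complex.I ^ iota (fun k => xor (xor (w1 k) (w2 k)) (w3 k))) •
          BmatC (w1 0) (w2 (Fin.last n)) := by
  rw [aux, parity]
end

section
/- Let t, K, H be natural numbers with K, H ≤ t, let B(t,H) denote the set of binary strings of length t with exactly H ones, and let v ∈ B(t,K) be in canonical form (all ones precede all zeros), with K ≥ H. Then the set {v ⊕ w : w ∈ B(t,H)} is the disjoint union over n ∈ {0,…,min{K,H,t−K,t−H}} of the sets W_n consisting of concatenations of a string in B(K, K−H+n) with a string in B(t−K, n); moreover every element of W_n has exactly K − H + 2n ones, and |W_n| = C(K, H−n)·C(t−K, n). -/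
def Bset (t K : ℕ) : Finset (Fin t → Bool) := Finset.univ.filter (fun w => iota w = K)

def iotaL {t : ℕ} (K : ℕ) (w : Fin t → Bool) : ℕ := ∑ i, if i.val < K then (w i).toNat else 0

def iotaR {t : ℕ} (K : ℕ) (w : Fin t → Bool) : ℕ := ∑ i, if K ≤ i.val then (w i).toNat else 0

def toN {t : ℕ} (w : Fin t → Bool) (m : ℕ) : ℕ := if h : m < t then (w ⟨m, h⟩).toNat else 0

lemma toN_le_one {t : ℕ} (w : Fin t → Bool) (m : ℕ) : toN w m ≤ 1 := by
  unfold toN; split <;> simp [Bool.toNat_le]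

lemma iota_eq_sum_range {t : ℕ} (w : Fin t → Bool) :
    iota w = ∑ m ∈ Finset.range t, toN w m := by
  unfold iota toN
  rw [Finset.sum_range fun m => _]
  apply Finset.sum_congr rfl
  intro i _
  simp

lemma iotaL_eq_sum_range {t K : ℕ} (hK : K ≤ t) (w : Fin t → Bool) :
    iotaL K w = ∑ m ∈ Finset.range K, toN w m := by
  unfold iotaL
  have h1 : (∑ i : Fin t, if i.val < K then (w i).toNat else 0)
      = ∑ m ∈ Finset.range t, (if m < K then toN w m else 0) := by
    rw [Finset.sum_range fun m => _]
    apply Finset.sum_congr rfl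
    intro i _
    unfold toN
    rcases Nat.lt_or_ge i.val K with h | h <;> simp [h, Nat.not_lt.mpr, i.isLt]
  rw [h1]
  rw [← Finset.sum_subset (Finset.range_subset_range.mpr hK)]
  · apply Finset.sum_congr rfl
    intro m hm
    simp [Finset.mem_range.mp hm]
  · intro m _ hm
    simp only [Finset.mem_range] at hm
    rw [if_neg (by omega)]

lemma iotaR_eq_sum_range {t K : ℕ} (hK : K ≤ t) (w : Fin t → Bool) :
    iotaR K w = ∑ m ∈ Finset.range (t - K), toN w (K + m) := by
  unfold iotaR
  have h1 : (∑ i : Fin t, if K ≤ i.val then (w i).toNat else 0)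
      = ∑ m ∈ Finset.range t, (if K ≤ m then toN w m else 0) := by
    rw [Finset.sum_range fun m => _]
    apply Finset.sum_congr rfl
    intro i _
    unfold toN
    rcases Nat.lt_or_ge i.val K with h | h <;> simp [h, Nat.not_le.mpr, i.isLt]
  have h2 : (∑ m ∈ Finset.range K, if K ≤ m then toN w m else 0) = 0 := by
    apply Finset.sum_eq_zero
    intro m hm
    simp only [Finset.mem_range] at hm
    rw [if_neg (by omega)]
  rw [h1, ← Finset.sum_range_add_sum_Ico _ hK, h2, zero_add,
    Finset.sum_Ico_eq_sum_range]
  apply Finset.sum_congr rfl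
  intro m _
  rw [if_pos (by omega)]

lemma iota_split {t K : ℕ} (hK : K ≤ t) (w : Fin t → Bool) :
    iota w = iotaL K w + iotaR K w := by
  unfold iota iotaL iotaR
  rw [← Finset.sum_add_distrib]
  apply Finset.sum_congr rfl
  intro i _
  rcases Nat.lt_or_ge i.val K with h | h
  · rw [if_pos h, if_neg (by omega), Nat.add_zero]
  · rw [if_neg (by omega), if_pos h, zero_add]

lemma iotaL_le {t K : ℕ} (hK : K ≤ t) (w : Fin t → Bool) : iotaL K w ≤ K := by
  rw [iotaL_eq_sum_range hK]
  calc ∑ m ∈ Finset.range K, toN w m ≤ ∑ _m ∈ Finset.range K, 1 :=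
        Finset.sum_le_sum (fun m _ => toN_le_one w m)
    _ = K := by simp

lemma iotaR_le {t K : ℕ} (hK : K ≤ t) (w : Fin t → Bool) : iotaR K w ≤ t - K := by
  rw [iotaR_eq_sum_range hK]
  calc ∑ m ∈ Finset.range (t - K), toN w (K + m) ≤ ∑ _m ∈ Finset.range (t - K), 1 :=
        Finset.sum_le_sum (fun m _ => toN_le_one w _)
    _ = t - K := by simp

lemma iota_eq_card {m : ℕ} (w : Fin m → Bool) :
    iota w = (Finset.univ.filter (fun i => w i = true)).card := by
  unfold iota
  rw [Finset.card_filter]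
  apply Finset.sum_congr rfl
  intro i _
  cases h : w i <;> simp [h]

lemma card_Bset (m k : ℕ) : (Bset m k).card = m.choose k := by
  have : (Bset m k).card = (Finset.powersetCard k (Finset.univ : Finset (Fin m))).card := by
    refine Finset.card_bij' (fun w _ => Finset.univ.filter (fun i => w i = true))
      (fun s _ => fun i => decide (i ∈ s)) ?_ ?_ ?_ ?_
    · intro w hw
      simp only [Bset, Finset.mem_filter] at hw
      rw [Finset.mem_powersetCard]
      exact ⟨Finset.subset_univ _, by rw [← iota_eq_card]; exact hw.2⟩
    · intro s hs
      simp only [Bset, Finset.mem_filter]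
      rw [Finset.mem_powersetCard] at hs
      refine ⟨Finset.mem_univ _, ?_⟩
      rw [iota_eq_card, ← hs.2]
      congr 1
      ext i
      simp
    · intro w _
      funext i
      simp
    · intro s _
      ext i
      simp
  rw [this, Finset.card_powersetCard]
  simp

lemma card_split {t : ℕ} (K a b : ℕ) (hK : K ≤ t) :
    (Finset.univ.filter (fun w : Fin t → Bool => iotaL K w = a ∧ iotaR K w = b)).card
      = (Bset K a).card * (Bset (t - K) b).card := by
  rw [← Finset.card_product]
  refine Finset.card_bij'
    (fun w _ => ((fun j : Fin K => w ⟨j.val, by omega⟩),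
                 (fun j : Fin (t - K) => w ⟨K + j.val, by omega⟩)))
    (fun p _ => fun i => if h : i.val < K then p.1 ⟨i.val, h⟩ else p.2 ⟨i.val - K, by omega⟩)
    ?_ ?_ ?_ ?_
  · intro w hw
    simp only [Finset.mem_filter, Finset.mem_univ, true_and] at hw
    simp only [Finset.mem_product, Bset, Finset.mem_filter, Finset.mem_univ, true_and]
    constructor
    · rw [iota_eq_sum_range, ← hw.1, iotaL_eq_sum_range hK]
      apply Finset.sum_congr rfl
      intro m hm
      simp only [Finset.mem_range] at hm
      unfold toN
      rw [dif_pos hm, dif_pos (by omega)]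
    · rw [iota_eq_sum_range, ← hw.2, iotaR_eq_sum_range hK]
      apply Finset.sum_congr rfl
      intro m hm
      simp only [Finset.mem_range] at hm
      unfold toN
      rw [dif_pos hm, dif_pos (by omega)]
  · intro p hp
    simp only [Finset.mem_product, Bset, Finset.mem_filter, Finset.mem_univ, true_and] at hp
    simp only [Finset.mem_filter, Finset.mem_univ, true_and]
    constructor
    · rw [iotaL_eq_sum_range hK, ← hp.1, iota_eq_sum_range]
      apply Finset.sum_congr rfl
      intro m hm
      simp only [Finset.mem_range] at hm
      unfold toN
      rw [dif_pos hm, dif_pos (by omega)]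
      simp only [dif_pos hm]
    · rw [iotaR_eq_sum_range hK, ← hp.2, iota_eq_sum_range]
      apply Finset.sum_congr rfl
      intro m hm
      simp only [Finset.mem_range] at hm
      unfold toN
      rw [dif_pos (show K + m < t by omega), dif_pos hm]
      simp only [dif_neg (show ¬ (K + m < K) by omega)]
      refine congrArg (fun x => (p.2 x).toNat) (Fin.ext ?_)
      show K + m - K = m
      omega
  · intro w _
    funext i
    by_cases h : i.val < K
    · simp only [dif_pos h]
    · simp only [dif_neg h]
      refine congrArg w (Fin.ext ?_)
      show K + (i.val - K) = i.val
      omega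
  · intro p _
    apply Prod.ext
    · funext j
      simp only [dif_pos j.isLt]
    · funext j
      simp only [dif_neg (show ¬ (K + j.val < K) by omega)]
      refine congrArg p.2 (Fin.ext ?_)
      show K + j.val - K = j.val
      omega

lemma iotaL_const_true {t K : ℕ} (hK : K ≤ t) : iotaL K (fun _ : Fin t => true) = K := by
  rw [iotaL_eq_sum_range hK]
  rw [Finset.sum_congr rfl (fun m hm => show toN (fun _ : Fin t => true) m = 1 by
    unfold toN
    rw [dif_pos (lt_of_lt_of_le (Finset.mem_range.mp hm) hK)]
    rfl)]
  simp

lemma iotaR_xor {t K : ℕ} (v u : Fin t → Bool) (hv : ∀ i, v i = decide (i.val < K)) :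
    iotaR K (fun i => xor (v i) (u i)) = iotaR K u := by
  unfold iotaR
  apply Finset.sum_congr rfl
  intro i _
  by_cases h : K ≤ i.val
  · rw [if_pos h, if_pos h]
    show (xor (v i) (u i)).toNat = (u i).toNat
    rw [hv i]
    simp [show ¬ i.val < K by omega]
  · rw [if_neg h, if_neg h]

lemma iotaL_xor {t K : ℕ} (hK : K ≤ t) (v u : Fin t → Bool) (hv : ∀ i, v i = decide (i.val < K)) :
    iotaL K (fun i => xor (v i) (u i)) + iotaL K u = K := by
  have hone : (∑ i : Fin t, if i.val < K then 1 else 0) = K := by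
    have h := iotaL_const_true hK
    unfold iotaL at h
    simpa using h
  unfold iotaL
  calc (∑ i : Fin t, if i.val < K then ((fun i => xor (v i) (u i)) i).toNat else 0)
        + (∑ i : Fin t, if i.val < K then (u i).toNat else 0)
      = ∑ i : Fin t, ((if i.val < K then ((fun i => xor (v i) (u i)) i).toNat else 0)
          + (if i.val < K then (u i).toNat else 0)) := Finset.sum_add_distrib.symm
    _ = ∑ i : Fin t, if i.val < K then 1 else 0 := by
        apply Finset.sum_congr rfl
        intro i _
        by_cases h : i.val < K
        · rw [if_pos h, if_pos h, if_pos h]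
          show (xor (v i) (u i)).toNat + (u i).toNat = 1
          rw [hv i]
          simp [h]
          cases u i <;> simp
        · simp [h]
    _ = K := hone

/-- The set of concatenations of a string in `B(K, K-H+n)` with a string in `B(t-K, n)`,
realized as length-`t` strings. -/
def Wset (t K H n : ℕ) : Finset (Fin t → Bool) :=
  Finset.univ.filter (fun w => iotaL K w = K - H + n ∧ iotaR K w = n)

theorem stmt3 (t K H : ℕ) (hK : K ≤ t) (hH : H ≤ t) (hHK : H ≤ K)
    (v : Fin t → Bool) (hv : ∀ i, v i = decide (i.val < K)) :
    ((Bset t H).image (fun w i => xor (v i) (w i)) =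
        (Finset.range (min (min K H) (min (t - K) (t - H)) + 1)).biUnion (fun n => Wset t K H n)) ∧
    (∀ n₁ n₂, n₁ ≠ n₂ → Disjoint (Wset t K H n₁) (Wset t K H n₂)) ∧
    (∀ n, ∀ w ∈ Wset t K H n, iota w = K - H + 2 * n) ∧
    (∀ n ≤ min (min K H) (min (t - K) (t - H)),
        (Wset t K H n).card = K.choose (H - n) * (t - K).choose n) := by
  refine ⟨?_, ?_, ?_, ?_⟩
  · ext u
    simp only [Finset.mem_image, Finset.mem_biUnion, Finset.mem_range]
    constructor
    · rintro ⟨w, hw, rfl⟩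
      simp only [Bset, Finset.mem_filter, Finset.mem_univ, true_and] at hw
      have hsplit : iotaL K w + iotaR K w = H := by rw [← iota_split hK w]; exact hw
      have hLle : iotaL K w ≤ K := iotaL_le hK w
      have hRle : iotaR K w ≤ t - K := iotaR_le hK w
      have hLx := iotaL_xor hK v w hv
      have hRx := iotaR_xor v w hv
      refine ⟨iotaR K w, by omega, ?_⟩
      simp only [Wset, Finset.mem_filter, Finset.mem_univ, true_and]
      exact ⟨by omega, hRx⟩
    · rintro ⟨n, hn, hu⟩
      simp only [Wset, Finset.mem_filter, Finset.mem_univ, true_and] at hu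
      have hnH : n ≤ H := by omega
      refine ⟨fun i => xor (v i) (u i), ?_, ?_⟩
      · simp only [Bset, Finset.mem_filter, Finset.mem_univ, true_and]
        rw [iota_split hK]
        have hLx := iotaL_xor hK v u hv
        have hRx := iotaR_xor v u hv
        omega
      · funext i
        simp
  · intro n₁ n₂ hne
    rw [Finset.disjoint_left]
    intro w h1 h2
    simp only [Wset, Finset.mem_filter, Finset.mem_univ, true_and] at h1 h2
    exact hne (h1.2.symm.trans h2.2)
  · intro n w hw
    simp only [Wset, Finset.mem_filter, Finset.mem_univ, true_and] at hw
    rw [iota_split hK]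
    omega
  · intro n hn
    have hnH : n ≤ H := by omega
    rw [Wset, card_split K (K - H + n) n hK, card_Bset, card_Bset,
      show K - H + n = K - (H - n) by omega, Nat.choose_symm (by omega : H - n ≤ K)]
end

section
/- Fix t ≥ 2, K ≤ t, bits a, a' ∈ {0,1}, and n ≥ 1. The number of binary strings v of length t with exactly K ones, v_1 = a, v_t = a', and ι(v ⊕ Sv) = 2n equals C_{K, n+aa'} · C_{t−K, n + (1−a)(1−a')}, where C_{K,m} is the number of compositions of K into m parts: C_{K,m} = binom(K−1, m−1) if K ≥ m > 0, C_{0,0} = 1, and 0 otherwise. -/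
/-- The number of compositions of `K` into `m` positive parts. -/
def Ccomp (K m : ℕ) : ℕ :=
  if K = 0 ∧ m = 0 then 1 else if 0 < m ∧ m ≤ K then (K - 1).choose (m - 1) else 0

/-!
A string starting with the letter `a` and changing value `c` times consists of `c + 1`
alternating runs: `c / 2 + 1` runs of `a` and `(c + 1) / 2` runs of `!a`. It is therefore
determined by a composition of the number of `a`'s into `c / 2 + 1` parts and one of the number
of `!a`'s into `(c + 1) / 2` parts. We prove this count by induction on the length, removing the
first letter, which turns into Pascal's rule for compositions.

The cyclic number of changes is the linear one plus `[v_t ≠ v_1]`, and the linear one has the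
parity of `[v_1 ≠ v_t]`. Hence, for strings with `v_1 = a`, having `2n` cyclic changes and
`v_t = a'` is the same as having `2n - [a ≠ a']` linear changes.
-/

open Finset

lemma Ccomp_zero_left (p : ℕ) : Ccomp 0 p = if p = 0 then 1 else 0 := by
  unfold Ccomp; split_ifs <;> omega

lemma Ccomp_zero_right (K : ℕ) : Ccomp K 0 = if K = 0 then 1 else 0 := by
  unfold Ccomp; split_ifs <;> omega

lemma Ccomp_succ_succ_eq_choose (K p : ℕ) : Ccomp (K + 1) (p + 1) = K.choose p := by
  unfold Ccomp
  rw [if_neg (by omega)]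
  split_ifs
  · simp
  · rw [Nat.choose_eq_zero_of_lt (by omega)]

lemma Ccomp_succ_succ (K p : ℕ) : Ccomp (K + 1) (p + 1) = Ccomp K (p + 1) + Ccomp K p := by
  rcases K with _ | K
  · rcases p with _ | p <;> simp [Ccomp_succ_succ_eq_choose, Ccomp_zero_left]
  rcases p with _ | p
  · simp [Ccomp_succ_succ_eq_choose, Ccomp_zero_right]
  · rw [Ccomp_succ_succ_eq_choose, Ccomp_succ_succ_eq_choose, Ccomp_succ_succ_eq_choose,
      Nat.choose_succ_succ', add_comm]

def changes {m : ℕ} (v : Fin (m + 1) → Bool) : ℕ :=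
  ∑ i : Fin m, (xor (v i.castSucc) (v i.succ)).toNat

lemma changes_cons {m : ℕ} (b : Bool) (w : Fin (m + 1) → Bool) :
    changes (Fin.cons b w : Fin (m + 2) → Bool) = (xor b (w 0)).toNat + changes w := by
  simp only [changes, Fin.sum_univ_succ, Fin.castSucc_zero, Fin.cons_zero, ← Fin.succ_castSucc,
    Fin.cons_succ]

lemma changes_mod_two {m : ℕ} (v : Fin (m + 1) → Bool) :
    changes v % 2 = (xor (v 0) (v (Fin.last m))).toNat := by
  induction m with
  | zero => simp [changes]
  | succ m ih =>
    rw [← Fin.cons_self_tail v, changes_cons, Nat.add_mod, ih, ← Fin.succ_last, Fin.cons_succ,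
      Fin.cons_zero]
    cases v 0 <;> cases Fin.tail v 0 <;> cases Fin.tail v (Fin.last m) <;> rfl

lemma iota_xor_rotate {m : ℕ} (v : Fin (m + 1) → Bool) :
    iota (fun i : Fin (m + 1) => xor (v i) (v ⟨(i.val + 1) % (m + 1), Nat.mod_lt _ m.succ_pos⟩)) =
      changes v + (xor (v (Fin.last m)) (v 0)).toNat := by
  rw [iota, Fin.sum_univ_castSucc, changes]
  congr 1
  · refine sum_congr rfl fun i _ => ?_
    congr 4
    simp [Nat.mod_eq_of_lt (Nat.succ_lt_succ i.isLt)]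
  · congr 4
    simp

lemma last_eq_and_changes_add_iff {m n : ℕ} (hn : 1 ≤ n) (v : Fin (m + 1) → Bool) (a' : Bool) :
    v (Fin.last m) = a' ∧ changes v + (xor (v (Fin.last m)) (v 0)).toNat = 2 * n ↔
      changes v = 2 * n - (xor (v 0) a').toNat := by
  have := changes_mod_two v
  revert this
  cases v 0 <;> cases v (Fin.last m) <;> cases a' <;> simp <;> omega

lemma card_filter_head_eq_and {α : Type*} [Fintype α] [DecidableEq α] {n : ℕ} (a : α)
    (P : (Fin (n + 1) → α) → Prop) [DecidablePred P] :
    #{v : Fin (n + 1) → α | v 0 = a ∧ P v} = #{w : Fin n → α | P (Fin.cons a w)} := by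
  refine card_nbij' Fin.tail (fun w => Fin.cons a w) ?_ ?_ ?_ ?_ <;> intro v hv <;>
    simp only [coe_filter, mem_univ, true_and, Set.mem_ofPred_eq] at hv ⊢
  · obtain ⟨rfl, hP⟩ := hv
    simpa
  · simpa
  · obtain ⟨rfl, -⟩ := hv
    simp
  · simp

lemma card_filter_cons_eq {α : Type*} [DecidableEq α] {n : ℕ} (a b : α) (w : Fin n → α) :
    #{i | (Fin.cons a w : Fin (n + 1) → α) i = b} = #{i | w i = b} + if a = b then 1 else 0 := by
  rw [Fin.card_filter_univ_succ']
  simp [add_comm]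

lemma card_filter_eq_not_add_card_filter_eq {n : ℕ} (w : Fin n → Bool) (a : Bool) :
    #{i | w i = !a} + #{i | w i = a} = n := by
  have := card_filter_add_card_filter_not (s := univ) (fun i => w i = a)
  simp only [Bool.eq_not, ne_eq, card_univ, Fintype.card_fin] at this ⊢
  omega

lemma card_filter_eq_true {n : ℕ} (w : Fin n → Bool) : #{i | w i = true} = iota w := by
  rw [card_filter, iota]
  exact sum_congr rfl fun i _ => by cases w i <;> rfl

lemma card_filter_eq_ite_iff_iota_eq {n K : ℕ} (hK : K ≤ n) (v : Fin n → Bool) (a : Bool) :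
    #{i | v i = a} = (if a then K else n - K) ↔ iota v = K := by
  have := card_filter_eq_not_add_card_filter_eq v true
  rw [Bool.not_true, card_filter_eq_true] at this
  cases a
  · rw [if_neg Bool.false_ne_true]
    omega
  · rw [if_pos rfl, card_filter_eq_true]

/-- `A` counts the letters equal to the first letter `a`, not the ones: this makes the count
`card_binaryStrings` symmetric under `a ↦ !a`, so that one induction covers both first letters. -/
def binaryStrings (m : ℕ) (a : Bool) (A c : ℕ) : Finset (Fin (m + 1) → Bool) :=
  {v | v 0 = a ∧ #{i | v i = a} = A ∧ changes v = c}

lemma binaryStrings_count_zero (m : ℕ) (a : Bool) (c : ℕ) : binaryStrings m a 0 c = ∅ := by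
  refine filter_eq_empty_iff.2 fun v _ ⟨h0, hA, _⟩ => ?_
  exact (card_pos.2 ⟨0, mem_filter.2 ⟨mem_univ _, h0⟩⟩).ne' hA

lemma card_binaryStrings_succ {m A B : ℕ} (a : Bool) (c : ℕ) (h : A + B = m + 1) :
    #(binaryStrings (m + 1) a (A + 1) c) = #(binaryStrings m a A c) +
      #{w : Fin (m + 1) → Bool | w 0 = !a ∧ #{i | w i = !a} = B ∧ changes w + 1 = c} := by
  rw [binaryStrings, card_filter_head_eq_and, ← card_filter_add_card_filter_not (· 0 = a),
    filter_filter, filter_filter]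
  simp only [card_filter_cons_eq, changes_cons, if_true, add_left_inj]
  congr 2 <;> ext w
  · simp only [binaryStrings, mem_filter, mem_univ, true_and]
    constructor
    · rintro ⟨⟨hA, hc⟩, h0⟩; simp_all
    · rintro ⟨h0, hA, hc⟩; simp_all
  · have hw := card_filter_eq_not_add_card_filter_eq w a
    simp only [mem_filter, mem_univ, true_and, ← Bool.eq_not]
    constructor
    · rintro ⟨⟨hA, hc⟩, h0⟩; simp_all; omega
    · rintro ⟨h0, hA, hc⟩; simp_all; omega

theorem card_binaryStrings (m : ℕ) (a : Bool) (A B c : ℕ) (h : A + B = m + 1) :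
    #(binaryStrings m a A c) = Ccomp A (c / 2 + 1) * Ccomp B ((c + 1) / 2) := by
  induction m generalizing a A B c with
  | zero =>
    rw [binaryStrings, card_filter_head_eq_and]
    simp only [card_filter_cons_eq, if_true, univ_eq_empty, filter_empty, card_empty, zero_add,
      changes, sum_empty, filter_const, univ_unique]
    obtain ⟨rfl, rfl⟩ | ⟨rfl, rfl⟩ : A = 0 ∧ B = 1 ∨ A = 1 ∧ B = 0 := by omega
    · simp [Ccomp_zero_left]
    · rcases c with _ | c <;> simp [Ccomp]
  | succ m ih =>
    rcases A with _ | A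
    · simp [binaryStrings_count_zero, Ccomp_zero_left]
    rw [card_binaryStrings_succ a c (by omega : A + B = m + 1), ih a A B c (by omega)]
    rcases c with _ | c
    · have : Ccomp A 0 * Ccomp B 0 = 0 := by simp [Ccomp_zero_right]; omega
      simp [Ccomp_succ_succ, add_mul, this]
    · simp only [add_left_inj]
      rw [← binaryStrings, ih (!a) B A c (by omega), Ccomp_succ_succ,
        show (c + 1 + 1) / 2 = c / 2 + 1 by omega]
      ring

theorem stmt6 (t K n : ℕ) (ht : 2 ≤ t) (hK : K ≤ t) (hn : 1 ≤ n) (a a' : Bool) :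
    (Finset.univ.filter (fun v : Fin t → Bool =>
        iota v = K ∧ v ⟨0, by omega⟩ = a ∧ v ⟨t - 1, by omega⟩ = a' ∧
        iota (fun i => xor (v i) (v ⟨(i.val + 1) % t, Nat.mod_lt _ (by omega)⟩)) = 2 * n)).card =
      Ccomp K (n + (a && a').toNat) * Ccomp (t - K) (n + (!a && !a').toNat) := by
  obtain ⟨m, rfl⟩ : ∃ m, t = m + 1 := ⟨t - 1, by omega⟩
  have hlast : (⟨m + 1 - 1, by omega⟩ : Fin (m + 1)) = Fin.last m := Fin.ext (by simp)
  calc _ = #(binaryStrings m a (if a then K else m + 1 - K) (2 * n - (xor a a').toNat)) := by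
        congr 1
        refine filter_congr fun v _ => ?_
        rw [iota_xor_rotate, Fin.zero_eta, hlast]
        by_cases h0 : v 0 = a
        · subst h0
          rw [card_filter_eq_ite_iff_iota_eq hK, ← last_eq_and_changes_add_iff hn]
          tauto
        · tauto
    _ = _ := card_binaryStrings m a _ (if a then m + 1 - K else K) _ (by split_ifs <;> omega)
    _ = _ := by
        have h1 : (2 * n + 1) / 2 = n := by omega
        have h2 : (2 * n - 1) / 2 + 1 = n := by omega
        have h3 : (2 * n - 1 + 1) / 2 = n := by omega
        cases a <;> cases a' <;> simp [h1, h2, h3, Nat.mul_comm (Ccomp K n)]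
end
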